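/- arXiv:2310.09975 — 2 statements merged into one kernel-verified Lean document; each statement's English description precedes it below -/
import Mathlib

section
/- Let (A, μ) be an associative algebra and α, β: A → A two commuting algebra endomorphisms. Then (A, μ∘(α⊗β), α, β) is a BiHom-associative algebra, i.e. the new product a*b := α(a)β(b) satisfies α(a)*(b*c) = (a*b)*β(c) for all a,b,c, and α,β are multiplicative for *. -/
/-- "Yau twist": if `(A, μ)` is associative and `α, β` are commuting
algebra endomorphisms, then `(A, μ∘(α⊗β), α, β)` is a BiHom-associative algebra. -/
theorem stmt1 (K A : Type*) [Field K] [AddCommGroup A] [Module K A]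
    (μ : A →ₗ[K] A →ₗ[K] A) (α β : A →ₗ[K] A)
    (hassoc : ∀ a b c : A, μ (μ a b) c = μ a (μ b c))
    (hαβ : ∀ a, α (β a) = β (α a))
    (hα : ∀ a b, α (μ a b) = μ (α a) (α b))
    (hβ : ∀ a b, β (μ a b) = μ (β a) (β b))
    (μ' : A →ₗ[K] A →ₗ[K] A)
    (hμ' : ∀ a b, μ' a b = μ (α a) (β b)) :
    (∀ a, α (β a) = β (α a)) ∧
    (∀ a b, α (μ' a b) = μ' (α a) (α b)) ∧
    (∀ a b, β (μ' a b) = μ' (β a) (β b)) ∧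
    (∀ a b c, μ' (α a) (μ' b c) = μ' (μ' a b) (β c)) := by
  refine ⟨hαβ, ?_, ?_, ?_⟩
  · intro a b; rw [hμ', hμ', hα, hαβ]
  · intro a b; rw [hμ', hμ', hβ, hαβ]
  · intro a b c; simp only [hμ', hα, hβ, hαβ, hassoc]
end

section
/- Let (A, μ_A, α_A, β_A) be a BiHom-associative algebra, M a vector space with two commuting linear maps α_M, β_M: M → M, a product μ_M on M, and actions ▷: A⊗M → M, ◁: M⊗A → M. Define on A⊕M the product (a+m)(b+n) := ab + a▷n + m◁b + mn. Then (A⊕M, μ_{A⊕M}, α_A⊕α_M, β_A⊕β_M) is a BiHom-associative algebra if and only if (A, μ_A, α_A, β_A) is BiHom-associative and (M, μ_M, ▷, ◁, α_M, β_M) is a BiHom-bimodule algebra over A. -/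
/-- BiHom-associative algebra. -/
def BHAssoc {K A : Type*} [Field K] [AddCommGroup A] [Module K A]
    (μ : A →ₗ[K] A →ₗ[K] A) (α β : A →ₗ[K] A) : Prop :=
  (∀ a, α (β a) = β (α a)) ∧
  (∀ a b, α (μ a b) = μ (α a) (α b)) ∧
  (∀ a b, β (μ a b) = μ (β a) (β b)) ∧
  (∀ a b c, μ (α a) (μ b c) = μ (μ a b) (β c))

/-- BiHom-bimodule algebra over a BiHom-associative algebra `(A, μ, α, β)`. -/
def BHBimodAlg {K A M : Type*} [Field K] [AddCommGroup A] [Module K A]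
    [AddCommGroup M] [Module K M]
    (μ : A →ₗ[K] A →ₗ[K] A) (α β : A →ₗ[K] A)
    (μM : M →ₗ[K] M →ₗ[K] M) (l : A →ₗ[K] M →ₗ[K] M) (r : M →ₗ[K] A →ₗ[K] M)
    (αM βM : M →ₗ[K] M) : Prop :=
  (∀ m, αM (βM m) = βM (αM m)) ∧
  (∀ a m, αM (l a m) = l (α a) (αM m)) ∧
  (∀ a m, βM (l a m) = l (β a) (βM m)) ∧
  (∀ a b m, l (α a) (l b m) = l (μ a b) (βM m)) ∧
  (∀ m a, αM (r m a) = r (αM m) (α a)) ∧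
  (∀ m a, βM (r m a) = r (βM m) (β a)) ∧
  (∀ m a b, r (αM m) (μ a b) = r (r m a) (β b)) ∧
  (∀ a m b, l (α a) (r m b) = r (l a m) (β b)) ∧
  (∀ m n, αM (μM m n) = μM (αM m) (αM n)) ∧
  (∀ m n, βM (μM m n) = μM (βM m) (βM n)) ∧
  (∀ m n p, μM (αM m) (μM n p) = μM (μM m n) (βM p)) ∧
  (∀ a m n, l (α a) (μM m n) = μM (l a m) (βM n)) ∧
  (∀ m n a, μM (αM m) (r n a) = r (μM m n) (β a)) ∧
  (∀ m a n, μM (αM m) (l a n) = μM (r m a) (βM n))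

/-- the infBH-product on `A ⊕ M` is BiHom-associative iff `A` is
BiHom-associative and `M` is a BiHom-bimodule algebra over `A`. -/
theorem stmt2 (K A M : Type*) [Field K] [AddCommGroup A] [Module K A]
    [AddCommGroup M] [Module K M]
    (μA : A →ₗ[K] A →ₗ[K] A) (αA βA : A →ₗ[K] A)
    (μM : M →ₗ[K] M →ₗ[K] M) (l : A →ₗ[K] M →ₗ[K] M) (r : M →ₗ[K] A →ₗ[K] M)
    (αM βM : M →ₗ[K] M)
    (hA : ∀ a, αA (βA a) = βA (αA a)) (hM : ∀ m, αM (βM m) = βM (αM m))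
    (μP : A × M →ₗ[K] A × M →ₗ[K] A × M)
    (hμP : ∀ (a : A) (m : M) (b : A) (n : M),
      μP (a, m) (b, n) = (μA a b, l a n + r m b + μM m n))
    (αP βP : A × M →ₗ[K] A × M)
    (hαP : ∀ (a : A) (m : M), αP (a, m) = (αA a, αM m))
    (hβP : ∀ (a : A) (m : M), βP (a, m) = (βA a, βM m)) :
    BHAssoc μP αP βP ↔ (BHAssoc μA αA βA ∧ BHBimodAlg μA αA βA μM l r αM βM) := by

  constructor
  · rintro ⟨-, h2, h3, h4⟩
    refine ⟨⟨hA, ?_, ?_, ?_⟩, hM, ?_, ?_, ?_, ?_, ?_, ?_, ?_, ?_, ?_, ?_, ?_, ?_, ?_⟩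
    · intro a b
      simpa [hμP, hαP] using congrArg Prod.fst (h2 (a, 0) (b, 0))
    · intro a b
      simpa [hμP, hβP] using congrArg Prod.fst (h3 (a, 0) (b, 0))
    · intro a b c
      simpa [hμP, hαP, hβP] using congrArg Prod.fst (h4 (a, 0) (b, 0) (c, 0))
    · intro a m
      simpa [hμP, hαP] using congrArg Prod.snd (h2 (a, 0) (0, m))
    · intro a m
      simpa [hμP, hβP] using congrArg Prod.snd (h3 (a, 0) (0, m))
    · intro a b m
      simpa [hμP, hαP, hβP] using congrArg Prod.snd (h4 (a, 0) (b, 0) (0, m))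
    · intro m a
      simpa [hμP, hαP] using congrArg Prod.snd (h2 (0, m) (a, 0))
    · intro m a
      simpa [hμP, hβP] using congrArg Prod.snd (h3 (0, m) (a, 0))
    · intro m a b
      simpa [hμP, hαP, hβP] using congrArg Prod.snd (h4 (0, m) (a, 0) (b, 0))
    · intro a m b
      simpa [hμP, hαP, hβP] using congrArg Prod.snd (h4 (a, 0) (0, m) (b, 0))
    · intro m n
      simpa [hμP, hαP] using congrArg Prod.snd (h2 (0, m) (0, n))
    · intro m n
      simpa [hμP, hβP] using congrArg Prod.snd (h3 (0, m) (0, n))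
    · intro m n p
      simpa [hμP, hαP, hβP] using congrArg Prod.snd (h4 (0, m) (0, n) (0, p))
    · intro a m n
      simpa [hμP, hαP, hβP] using congrArg Prod.snd (h4 (a, 0) (0, m) (0, n))
    · intro m n a
      simpa [hμP, hαP, hβP] using congrArg Prod.snd (h4 (0, m) (0, n) (a, 0))
    · intro m a n
      simpa [hμP, hαP, hβP] using congrArg Prod.snd (h4 (0, m) (a, 0) (0, n))
  · rintro ⟨⟨-, hαm, hβm, hassoc⟩, -, lα, lβ, ll, rα, rβ, rr, lr, μα, μβ, μassoc, lμ, μr, μl⟩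
    refine ⟨?_, ?_, ?_, ?_⟩
    · rintro ⟨a, m⟩
      simp [hαP, hβP, hA, hM]
    · rintro ⟨a, m⟩ ⟨b, n⟩
      simp only [hμP, hαP, map_add, hαm, lα, rα, μα, Prod.mk.injEq]
    · rintro ⟨a, m⟩ ⟨b, n⟩
      simp only [hμP, hβP, map_add, hβm, lβ, rβ, μβ, Prod.mk.injEq]
    · rintro ⟨a, m⟩ ⟨b, n⟩ ⟨c, p⟩
      simp only [hμP, hαP, hβP, map_add, LinearMap.add_apply, Prod.mk.injEq,
        hassoc, ll, lr, lμ, rr, μl, μr, μassoc]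
      exact ⟨trivial, by abel⟩
end
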